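/- Let U ∈ ℝ^{i×n} with U Uᵀ invertible, V ∈ ℝ^{o×n}, and let P be an orthogonal projection on ℝ^o with range C. Then the constrained least-squares minimum min{‖WU − V‖_F² : W u_j ⊥ C for all columns u_j of U} equals ‖(I − P)V Uᵀ(UUᵀ)⁻¹ U − (I − P)V‖_F² + ‖PV‖_F². -/

import Mathlib

/-!
Projecting the residual `W U - V` onto `C` and `C^⊥` splits the cost: the constraint forces
`P (W U - V) = -P V`, a fixed contribution `‖P V‖²`, while the `C^⊥` part is an unconstrained
least-squares residual for the target `(I - P) V`. Its minimiser `(I - P) V Uᵀ (U Uᵀ)⁻¹`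
satisfies the normal equations and is itself feasible, so the bound is attained.
-/

open Matrix BigOperators

/-- Squared Frobenius norm of a matrix. -/
def frobSq {m n : ℕ} (A : Matrix (Fin m) (Fin n) ℝ) : ℝ := ∑ i, ∑ j, (A i j) ^ 2

section Frobenius

variable {m n : ℕ}

lemma frobSq_eq_trace (A : Matrix (Fin m) (Fin n) ℝ) : frobSq A = (Aᵀ * A).trace := by
  simp only [frobSq, trace, diag, mul_apply, transpose_apply, pow_two]
  rw [Finset.sum_comm]

lemma frobSq_nonneg (A : Matrix (Fin m) (Fin n) ℝ) : 0 ≤ frobSq A :=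
  Finset.sum_nonneg fun _ _ => Finset.sum_nonneg fun _ _ => sq_nonneg _

lemma frobSq_neg (A : Matrix (Fin m) (Fin n) ℝ) : frobSq (-A) = frobSq A := by
  simp [frobSq]

lemma frobSq_add_of_trace_transpose_mul_eq_zero {A B : Matrix (Fin m) (Fin n) ℝ}
    (h : (Aᵀ * B).trace = 0) : frobSq (A + B) = frobSq A + frobSq B := by
  have h' : (Bᵀ * A).trace = 0 := by
    rw [← trace_transpose, transpose_mul, transpose_transpose, h]
  simp only [frobSq_eq_trace, transpose_add, Matrix.add_mul, Matrix.mul_add, trace_add, h, h']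
  ring

end Frobenius

section LeastSquares

variable {m k n : ℕ}

lemma frobSq_mul_sub_eq_of_normal_equations {U : Matrix (Fin k) (Fin n) ℝ}
    {X₀ : Matrix (Fin m) (Fin k) ℝ} {Y : Matrix (Fin m) (Fin n) ℝ}
    (hX₀ : (X₀ * U - Y) * Uᵀ = 0) (X : Matrix (Fin m) (Fin k) ℝ) :
    frobSq (X * U - Y) = frobSq ((X - X₀) * U) + frobSq (X₀ * U - Y) := by
  rw [show X * U - Y = (X - X₀) * U + (X₀ * U - Y) by rw [Matrix.sub_mul]; abel]
  apply frobSq_add_of_trace_transpose_mul_eq_zero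
  rw [transpose_mul, Matrix.mul_assoc, trace_mul_comm, Matrix.mul_assoc, hX₀, Matrix.mul_zero,
    trace_zero]

lemma mul_transpose_mul_inv_mul_sub_mul_transpose {U : Matrix (Fin k) (Fin n) ℝ}
    (hU : IsUnit (U * Uᵀ)) (Y : Matrix (Fin m) (Fin n) ℝ) :
    (Y * Uᵀ * (U * Uᵀ)⁻¹ * U - Y) * Uᵀ = 0 := by
  rw [Matrix.sub_mul, Matrix.mul_assoc _ U, Matrix.mul_assoc _ _ (U * Uᵀ),
    nonsing_inv_mul _ ((isUnit_iff_isUnit_det _).mp hU), Matrix.mul_one, sub_self]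

lemma frobSq_leastSquares_le {U : Matrix (Fin k) (Fin n) ℝ} (hU : IsUnit (U * Uᵀ))
    (Y : Matrix (Fin m) (Fin n) ℝ) (X : Matrix (Fin m) (Fin k) ℝ) :
    frobSq (Y * Uᵀ * (U * Uᵀ)⁻¹ * U - Y) ≤ frobSq (X * U - Y) := by
  rw [frobSq_mul_sub_eq_of_normal_equations
    (mul_transpose_mul_inv_mul_sub_mul_transpose hU Y) X]
  exact le_add_of_nonneg_left (frobSq_nonneg _)

end LeastSquares

lemma mul_eq_zero_iff_forall_mulVec_col {R l k n : Type*} [Semiring R] [Fintype k]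
    {A : Matrix l k R} {U : Matrix k n R} :
    A * U = 0 ↔ ∀ j, A *ᵥ (fun r => U r j) = 0 :=
  ⟨fun h j => funext fun r => congrFun (congrFun h r) j,
    fun h => ext fun r j => congrFun (h j) r⟩

lemma frobSq_sub_eq_of_proj_mul_eq_zero {m n : ℕ} {P : Matrix (Fin m) (Fin m) ℝ}
    (hPsym : Pᵀ = P) (hPidem : P * P = P) {A V : Matrix (Fin m) (Fin n) ℝ} (hA : P * A = 0) :
    frobSq (A - V) = frobSq (A - (1 - P) * V) + frobSq (P * V) := by
  have hPcompl : P * (A - (1 - P) * V) = 0 := by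
    rw [Matrix.mul_sub, hA, ← Matrix.mul_assoc, Matrix.mul_sub, Matrix.mul_one, hPidem, sub_self,
      Matrix.zero_mul, sub_self]
  have horth : (A - (1 - P) * V)ᵀ * P = 0 := by
    rw [← hPsym, ← transpose_mul, hPsym, hPcompl, transpose_zero]
  rw [← frobSq_neg (P * V), ← frobSq_add_of_trace_transpose_mul_eq_zero]
  · congr 1
    rw [Matrix.sub_mul, Matrix.one_mul]
    abel
  · rw [Matrix.mul_neg, ← Matrix.mul_assoc, horth, Matrix.zero_mul, neg_zero, trace_zero]

theorem constrained_ls_min_value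
    {i n o : ℕ}
    (U : Matrix (Fin i) (Fin n) ℝ)
    (hU : IsUnit (U * Uᵀ))
    (V : Matrix (Fin o) (Fin n) ℝ)
    (P : Matrix (Fin o) (Fin o) ℝ)
    (hPsym : Pᵀ = P) (hPidem : P * P = P) :
    IsLeast
      {r : ℝ | ∃ W : Matrix (Fin o) (Fin i) ℝ,
        (∀ j : Fin n, P.mulVec (W.mulVec (fun k => U k j)) = 0) ∧
        r = frobSq (W * U - V)}
      (frobSq ((1 - P) * V * Uᵀ * (U * Uᵀ)⁻¹ * U - (1 - P) * V) + frobSq (P * V)) := by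
  have hfeasible (W : Matrix (Fin o) (Fin i) ℝ) :
      (∀ j, P *ᵥ (W *ᵥ fun k => U k j) = 0) ↔ P * (W * U) = 0 := by
    simp only [mulVec_mulVec, ← Matrix.mul_assoc, mul_eq_zero_iff_forall_mulVec_col]
  set W₀ := (1 - P) * V * Uᵀ * (U * Uᵀ)⁻¹
  have hW₀ : P * (W₀ * U) = 0 := by
    simp only [W₀, ← Matrix.mul_assoc, Matrix.mul_sub, Matrix.mul_one, hPidem, sub_self,
      Matrix.zero_mul]
  refine ⟨⟨W₀, (hfeasible W₀).2 hW₀, ?_⟩, ?_⟩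
  · exact (frobSq_sub_eq_of_proj_mul_eq_zero hPsym hPidem hW₀).symm
  · rintro r ⟨W, hW, rfl⟩
    rw [frobSq_sub_eq_of_proj_mul_eq_zero hPsym hPidem ((hfeasible W).1 hW)]
    gcongr
    exact frobSq_leastSquares_le hU _ W
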